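/- Let μ ∈ ℝ, σ > 0, t ∈ ℝ, λ > (μ−t)₋, and m = μ − t + λ > 0. For δ ∈ (0,1) let F_δ be the two-point distribution P(X = μ − σ√(δ/(1−δ))) = 1−δ, P(X = μ + σ√((1−δ)/δ)) = δ. Then F_δ has mean μ and variance σ², and as δ → 0, E^{F_δ}[(X−t)₋²] → ((μ−t)₋)² and E^{F_δ}[(X−t)₊] → (μ−t)₊ < m; consequently for sufficiently small δ, F_δ lies in the set of distributions with mean μ, variance σ², and E[(X−t)₊] ≤ m. -/

import Mathlib

/-! The atoms are placed so that their mass-weighted deviations from `μ` are `∓σ√(δ(1-δ))`,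
which gives mean `μ` and variance `σ²`. As `δ → 0` the lower atom tends to `μ` with mass
tending to `1`, while the upper atom, of mass `δ`, contributes only `O(√δ)` to the expectation
of any function of at most linear growth to the right of `μ`; so such expectations tend to the
value at `μ`. -/

open MeasureTheory

/-- The two-point distribution `F_δ` placing mass `1-δ` at `μ - σ√(δ/(1-δ))`
and mass `δ` at `μ + σ√((1-δ)/δ)`. -/
noncomputable def Fdelta (μ σ δ : ℝ) : Measure ℝ :=
  ENNReal.ofReal (1 - δ) • Measure.dirac (μ - σ * Real.sqrt (δ / (1 - δ)))
    + ENNReal.ofReal δ • Measure.dirac (μ + σ * Real.sqrt ((1 - δ) / δ))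

open Filter Topology

theorem integral_smul_dirac_add_smul_dirac {α : Type*} [MeasurableSpace α]
    [MeasurableSingletonClass α] {p q : ℝ} (hp : 0 ≤ p) (hq : 0 ≤ q) (a b : α) (f : α → ℝ) :
    ∫ x, f x ∂(ENNReal.ofReal p • Measure.dirac a + ENNReal.ofReal q • Measure.dirac b)
      = p * f a + q * f b := by
  have hint : ∀ (r : ℝ) (c : α), Integrable f (ENNReal.ofReal r • Measure.dirac c) :=
    fun _ _ => (integrable_dirac enorm_lt_top).smul_measure ENNReal.ofReal_ne_top
  rw [integral_add_measure (hint _ _) (hint _ _), integral_smul_measure, integral_smul_measure,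
    integral_dirac, integral_dirac, ENNReal.toReal_ofReal hp, ENNReal.toReal_ofReal hq,
    smul_eq_mul, smul_eq_mul]

theorem integral_Fdelta (μ σ : ℝ) {δ : ℝ} (hδ : δ ∈ Set.Icc (0 : ℝ) 1) (f : ℝ → ℝ) :
    ∫ x, f x ∂(Fdelta μ σ δ)
      = (1 - δ) * f (μ - σ * √(δ / (1 - δ))) + δ * f (μ + σ * √((1 - δ) / δ)) :=
  integral_smul_dirac_add_smul_dirac (by linarith [hδ.2]) hδ.1 _ _ f

theorem isProbabilityMeasure_Fdelta (μ σ : ℝ) {δ : ℝ} (hδ : δ ∈ Set.Icc (0 : ℝ) 1) :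
    IsProbabilityMeasure (Fdelta μ σ δ) := by
  constructor
  simp only [Fdelta, Measure.add_apply, Measure.smul_apply, measure_univ, smul_eq_mul, mul_one]
  rw [← ENNReal.ofReal_add (by linarith [hδ.2]) hδ.1, sub_add_cancel, ENNReal.ofReal_one]

theorem mul_sqrt_div_self {a : ℝ} (ha : 0 ≤ a) (b : ℝ) : a * √(b / a) = √(a * b) := by
  rcases ha.eq_or_lt with rfl | ha
  · simp
  · rw [show a * b = a ^ 2 * (b / a) by field_simp, Real.sqrt_mul (sq_nonneg _),
      Real.sqrt_sq ha.le]

theorem one_sub_mul_sqrt_div_one_sub {δ : ℝ} (hδ : δ ≤ 1) :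
    (1 - δ) * √(δ / (1 - δ)) = √(δ * (1 - δ)) := by
  rw [mul_sqrt_div_self (sub_nonneg.2 hδ), mul_comm]

theorem integral_id_Fdelta (μ σ : ℝ) {δ : ℝ} (hδ : δ ∈ Set.Ioo (0 : ℝ) 1) :
    ∫ x, x ∂(Fdelta μ σ δ) = μ := by
  rw [integral_Fdelta μ σ (Set.Ioo_subset_Icc_self hδ) fun x => x]
  linear_combination (-σ) * one_sub_mul_sqrt_div_one_sub hδ.2.le
    + σ * mul_sqrt_div_self hδ.1.le (1 - δ)

theorem integral_sq_Fdelta (μ σ : ℝ) {δ : ℝ} (hδ : δ ∈ Set.Ioo (0 : ℝ) 1) :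
    ∫ x, x ^ 2 ∂(Fdelta μ σ δ) = μ ^ 2 + σ ^ 2 := by
  have h : 0 < 1 - δ := by linarith [hδ.2]
  have hlow : (1 - δ) * √(δ / (1 - δ)) ^ 2 = δ := by
    rw [Real.sq_sqrt (div_nonneg hδ.1.le h.le)]; field_simp
  have hup : δ * √((1 - δ) / δ) ^ 2 = 1 - δ := by
    rw [Real.sq_sqrt (div_nonneg h.le hδ.1.le)]; field_simp [hδ.1.ne']
  rw [integral_Fdelta μ σ (Set.Ioo_subset_Icc_self hδ) (· ^ 2)]
  linear_combination (-2 * μ * σ) * one_sub_mul_sqrt_div_one_sub hδ.2.le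
    + (2 * μ * σ) * mul_sqrt_div_self hδ.1.le (1 - δ) + σ ^ 2 * hlow + σ ^ 2 * hup

theorem tendsto_integral_Fdelta {μ σ : ℝ} (hσ : 0 ≤ σ) {f : ℝ → ℝ} (hf : ContinuousAt f μ)
    {C K : ℝ} (hgrowth : ∀ x, μ ≤ x → |f x| ≤ C + K * (x - μ)) :
    Tendsto (fun δ => ∫ x, f x ∂(Fdelta μ σ δ)) (𝓝[>] 0) (𝓝 (f μ)) := by
  have hIoo : Set.Ioo (0 : ℝ) 1 ∈ 𝓝[>] (0 : ℝ) := Ioo_mem_nhdsGT one_pos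
  have hlow : Tendsto (fun δ : ℝ => (1 - δ) * f (μ - σ * √(δ / (1 - δ)))) (𝓝 0) (𝓝 (f μ)) := by
    have hatom : Tendsto (fun δ : ℝ => μ - σ * √(δ / (1 - δ))) (𝓝 0) (𝓝 μ) := by
      have hc : ContinuousAt (fun δ : ℝ => μ - σ * √(δ / (1 - δ))) 0 := by
        fun_prop (disch := norm_num)
      simpa using hc.tendsto
    simpa using ((tendsto_const_nhds (x := (1 : ℝ))).sub tendsto_id).mul (hf.tendsto.comp hatom)
  have hup : Tendsto (fun δ : ℝ => δ * f (μ + σ * √((1 - δ) / δ))) (𝓝[>] 0) (𝓝 0) := by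
    have hbound : Tendsto (fun δ : ℝ => δ * C + K * σ * √(δ * (1 - δ))) (𝓝 0) (𝓝 0) := by
      have hc : ContinuousAt (fun δ : ℝ => δ * C + K * σ * √(δ * (1 - δ))) 0 := by fun_prop
      simpa using hc.tendsto
    refine squeeze_zero_norm' ?_ (hbound.mono_left nhdsWithin_le_nhds)
    filter_upwards [hIoo] with δ hδ
    have hx : μ ≤ μ + σ * √((1 - δ) / δ) := le_add_of_nonneg_right (by positivity)
    calc ‖δ * f (μ + σ * √((1 - δ) / δ))‖ = δ * |f (μ + σ * √((1 - δ) / δ))| := by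
          rw [Real.norm_eq_abs, abs_mul, abs_of_pos hδ.1]
      _ ≤ δ * (C + K * (μ + σ * √((1 - δ) / δ) - μ)) :=
          mul_le_mul_of_nonneg_left (hgrowth _ hx) hδ.1.le
      _ = δ * C + K * σ * (δ * √((1 - δ) / δ)) := by ring
      _ = δ * C + K * σ * √(δ * (1 - δ)) := by rw [mul_sqrt_div_self hδ.1.le]
  refine ((hlow.mono_left nhdsWithin_le_nhds).add hup).congr' ?_ |>.trans (by rw [add_zero])
  filter_upwards [hIoo] with δ hδ
  rw [integral_Fdelta μ σ (Set.Ioo_subset_Icc_self hδ)]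

theorem stmt_19 (μ σ t lam m : ℝ) (hσ : 0 < σ) (hlam : max (t - μ) 0 < lam)
    (hm : m = μ - t + lam) :
    0 < m ∧
    (∀ δ ∈ Set.Ioo (0 : ℝ) 1,
      IsProbabilityMeasure (Fdelta μ σ δ) ∧
      (∫ x, x ∂(Fdelta μ σ δ)) = μ ∧
      (∫ x, x ^ 2 ∂(Fdelta μ σ δ)) = μ ^ 2 + σ ^ 2) ∧
    Filter.Tendsto (fun δ : ℝ => ∫ x, (max (t - x) 0) ^ 2 ∂(Fdelta μ σ δ))
      (nhdsWithin 0 (Set.Ioi 0)) (nhds ((max (t - μ) 0) ^ 2)) ∧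
    Filter.Tendsto (fun δ : ℝ => ∫ x, max (x - t) 0 ∂(Fdelta μ σ δ))
      (nhdsWithin 0 (Set.Ioi 0)) (nhds (max (μ - t) 0)) ∧
    max (μ - t) 0 < m ∧
    (∃ δ₀ > 0, ∀ δ ∈ Set.Ioo (0 : ℝ) δ₀,
      (∫ x, max (x - t) 0 ∂(Fdelta μ σ δ)) ≤ m) := by
  obtain ⟨htμ, hlam0⟩ := max_lt_iff.1 hlam
  have hm0 : 0 < m := by linarith
  have hmax : max (μ - t) 0 < m := max_lt (by linarith) hm0
  have hneg : Tendsto (fun δ : ℝ => ∫ x, (max (t - x) 0) ^ 2 ∂(Fdelta μ σ δ))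
      (𝓝[>] 0) (𝓝 ((max (t - μ) 0) ^ 2)) :=
    tendsto_integral_Fdelta hσ.le (f := fun x => (max (t - x) 0) ^ 2) (by fun_prop)
      (C := (max (t - μ) 0) ^ 2) (K := 0) fun x hx => by
        rw [abs_of_nonneg (sq_nonneg _), zero_mul, add_zero]
        exact pow_le_pow_left₀ (le_max_right _ _) (max_le_max_right _ (by linarith)) 2
  have hpos : Tendsto (fun δ : ℝ => ∫ x, max (x - t) 0 ∂(Fdelta μ σ δ))
      (𝓝[>] 0) (𝓝 (max (μ - t) 0)) :=
    tendsto_integral_Fdelta hσ.le (f := fun x => max (x - t) 0) (by fun_prop)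
      (C := max (μ - t) 0) (K := 1) fun x _ => by
        rw [abs_of_nonneg (le_max_right _ _), one_mul, max_le_iff]
        constructor <;> linarith [le_max_left (μ - t) 0, le_max_right (μ - t) 0]
  obtain ⟨δ₀, hδ₀, hsub⟩ := mem_nhdsGT_iff_exists_Ioo_subset.1 (hpos.eventually_le_const hmax)
  refine ⟨hm0, fun δ hδ => ⟨?_, integral_id_Fdelta μ σ hδ, integral_sq_Fdelta μ σ hδ⟩,
    hneg, hpos, hmax, δ₀, hδ₀, fun δ hδ => hsub hδ⟩
  exact isProbabilityMeasure_Fdelta μ σ (Set.Ioo_subset_Icc_self hδ)
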